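/- Let (X, μ) be a finite measure space, α > 0, and φ: X → ℝ a measurable function with φ ≤ -1 everywhere. Assume that for every k ≥ 1 one has ∫_X e^{-(α - 2^{-k-1})φ} dμ < +∞. Then there exists an increasing convex function χ: (-∞,-1] → (-∞,0] with χ(t) → -∞ as t → -∞ and χ(t)/t → 0 as t → -∞, such that ∫_X e^{χ(φ) - αφ} dμ < +∞. -/
import Mathlib


open MeasureTheory Filter
open scoped ENNReal Topology

/-- Let `(X,μ)` be a finite measure space, `α > 0`, and `φ : X → ℝ`
measurable with `φ ≤ -1` everywhere. Assume that for every `k ≥ 1` one has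
`∫_X e^{-(α - 2^{-k-1})φ} dμ < +∞`. Then there exists an increasing convex function
`χ : (-∞,-1] → (-∞,0]` with `χ(t) → -∞` and `χ(t)/t → 0` as `t → -∞`, such that
`∫_X e^{χ(φ) - αφ} dμ < +∞`. -/
theorem exists_convex_weight_integrable {X : Type*} [MeasurableSpace X]
    (μ : Measure X) [IsFiniteMeasure μ]
    (α : ℝ) (hα : 0 < α) (φ : X → ℝ) (hφm : Measurable φ) (hφ : ∀ x, φ x ≤ -1)
    (hint : ∀ k : ℕ, 1 ≤ k →
      (∫⁻ x, ENNReal.ofReal (Real.exp (-(α - 2 ^ (-(k : ℝ) - 1)) * φ x)) ∂μ) < ⊤) :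
    ∃ χ : ℝ → ℝ, MonotoneOn χ (Set.Iic (-1)) ∧ ConvexOn ℝ (Set.Iic (-1)) χ ∧
      (∀ t ≤ (-1 : ℝ), χ t ≤ 0) ∧
      Tendsto χ atBot atBot ∧
      Tendsto (fun t => χ t / t) atBot (𝓝 0) ∧
      (∫⁻ x, ENNReal.ofReal (Real.exp (χ (φ x) - α * φ x)) ∂μ) < ⊤ := by
  classical
  -- the integrals from the hypothesis
  set I : ℕ → ℝ≥0∞ := fun n =>
    ∫⁻ x, ENNReal.ofReal (Real.exp (-(α - 2 ^ (-((n : ℝ) + 1) - 1)) * φ x)) ∂μ with hI_def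
  have hI : ∀ n, I n < ⊤ := by
    intro n
    have h := hint (n + 1) (Nat.le_add_left 1 n)
    have hcast : -((((n : ℕ) + 1 : ℕ) : ℝ)) - 1 = -((n : ℝ) + 1) - 1 := by push_cast; ring
    rw [hcast] at h
    exact h
  -- slopes
  set s : ℕ → ℝ := fun n => (2 : ℝ) ^ (-(n : ℝ) - 1) with hs_def
  have hs_pos : ∀ n, 0 < s n := fun n => Real.rpow_pos_of_pos two_pos _
  have hs_le_one : ∀ n, s n ≤ 1 := by
    intro n
    have : (2 : ℝ) ^ (-(n : ℝ) - 1) ≤ (2 : ℝ) ^ (0 : ℝ) := by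
      apply Real.rpow_le_rpow_of_exponent_le one_le_two
      have : (0 : ℝ) ≤ (n : ℝ) := Nat.cast_nonneg n
      linarith
    simpa [Real.rpow_zero] using this
  have hs_anti : ∀ m n : ℕ, m ≤ n → s n ≤ s m := by
    intro m n hmn
    apply Real.rpow_le_rpow_of_exponent_le one_le_two
    have : (m : ℝ) ≤ (n : ℝ) := Nat.cast_le.2 hmn
    linarith
  have hs_eq : ∀ n, s n = ((2 : ℝ)⁻¹) ^ (n + 1) := by
    intro n
    show (2 : ℝ) ^ (-(n : ℝ) - 1) = ((2 : ℝ)⁻¹) ^ (n + 1)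
    rw [show -(n : ℝ) - 1 = -((n : ℝ) + 1) by ring, Real.rpow_neg (by norm_num : (0:ℝ) ≤ 2),
      show ((n : ℝ) + 1) = (((n + 1 : ℕ) : ℝ)) by push_cast; ring, Real.rpow_natCast, inv_pow]
  have hs0 : Tendsto s atTop (𝓝 0) := by
    have h1 : Tendsto (fun n : ℕ => ((2 : ℝ)⁻¹) ^ n) atTop (𝓝 0) :=
      tendsto_pow_atTop_nhds_zero_of_lt_one (by norm_num) (by norm_num)
    have h2 : Tendsto (fun n : ℕ => ((2 : ℝ)⁻¹) ^ (n + 1)) atTop (𝓝 0) :=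
      h1.comp (tendsto_add_atTop_nat 1)
    simpa [← hs_eq] using h2
  -- constants
  set B : ℕ → ℝ := fun n => max 1 ((I n).toReal) with hB_def
  have hB1 : ∀ n, 1 ≤ B n := fun n => le_max_left _ _
  have hBpos : ∀ n, 0 < B n := fun n => lt_of_lt_of_le one_pos (hB1 n)
  have hlogB : ∀ n, 0 ≤ Real.log (B n) := fun n => Real.log_nonneg (hB1 n)
  set c : ℕ → ℝ := fun n => (n : ℝ) + ∑ j ∈ Finset.range (n + 1), Real.log (B j) with hc_def
  have hc_nonneg : ∀ n, 0 ≤ c n := by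
    intro n
    have h1 : (0 : ℝ) ≤ (n : ℝ) := Nat.cast_nonneg n
    have h2 : (0 : ℝ) ≤ ∑ j ∈ Finset.range (n + 1), Real.log (B j) :=
      Finset.sum_nonneg fun j _ => hlogB j
    simp only [hc_def]; linarith
  have hc_ge : ∀ n : ℕ, (n : ℝ) ≤ c n := by
    intro n
    have h2 : (0 : ℝ) ≤ ∑ j ∈ Finset.range (n + 1), Real.log (B j) :=
      Finset.sum_nonneg fun j _ => hlogB j
    simp only [hc_def]; linarith
  have hc_mono : Monotone c := by
    intro m n hmn
    have h1 : (m : ℝ) ≤ (n : ℝ) := Nat.cast_le.2 hmn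
    have h2 : ∑ j ∈ Finset.range (m + 1), Real.log (B j)
        ≤ ∑ j ∈ Finset.range (n + 1), Real.log (B j) :=
      Finset.sum_le_sum_of_subset_of_nonneg
        (Finset.range_subset_range.2 (by omega)) (fun j _ _ => hlogB j)
    simp only [hc_def]; linarith
  have hc_single : ∀ n : ℕ, (n : ℝ) + Real.log (B n) ≤ c n := by
    intro n
    have := Finset.single_le_sum (f := fun j => Real.log (B j))
      (fun j _ => hlogB j) (Finset.self_mem_range_succ n)
    simp only [hc_def]; linarith
  -- the weight function
  set χ : ℝ → ℝ := fun t => ⨆ n, (s n * t - c n) with hχ_def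
  have hbdd : ∀ t, BddAbove (Set.range fun n => s n * t - c n) := by
    intro t
    refine ⟨|t|, ?_⟩
    rintro y ⟨n, rfl⟩
    have h1 : s n * t ≤ |s n * t| := le_abs_self _
    have h2 : |s n * t| = s n * |t| := by
      rw [abs_mul, abs_of_pos (hs_pos n)]
    have h3 : s n * |t| ≤ 1 * |t| :=
      mul_le_mul_of_nonneg_right (hs_le_one n) (abs_nonneg t)
    have := hc_nonneg n
    show s n * t - c n ≤ |t|
    linarith
  have hle : ∀ n t, s n * t - c n ≤ χ t := fun n t => le_ciSup (hbdd t) n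
  have hub : ∀ t M, (∀ n, s n * t - c n ≤ M) → χ t ≤ M := fun t M h => ciSup_le h
  have hmono : Monotone χ := by
    intro t u htu
    apply hub
    intro n
    have : s n * t ≤ s n * u := mul_le_mul_of_nonneg_left htu (hs_pos n).le
    linarith [hle n u]
  have hnonpos : ∀ t ≤ (-1 : ℝ), χ t ≤ 0 := by
    intro t ht
    apply hub
    intro n
    have h1 : s n * t ≤ 0 := mul_nonpos_of_nonneg_of_nonpos (hs_pos n).le (by linarith)
    linarith [hc_nonneg n]
  refine ⟨χ, hmono.monotoneOn _, ?_, hnonpos, ?_, ?_, ?_⟩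
  · -- convexity
    refine ⟨convex_Iic _, ?_⟩
    intro x _ y _ a b ha hb hab
    apply hub
    intro n
    have h1 : a * (s n * x - c n) ≤ a * χ x := mul_le_mul_of_nonneg_left (hle n x) ha
    have h2 : b * (s n * y - c n) ≤ b * χ y := mul_le_mul_of_nonneg_left (hle n y) hb
    have h3 : s n * (a * x + b * y) - c n = a * (s n * x - c n) + b * (s n * y - c n) := by
      linear_combination (c n) * hab
    simp only [smul_eq_mul]
    linarith
  · -- tendsto atBot
    rw [tendsto_atBot]
    intro M
    set M' := min M 0 with hM'
    have hM'0 : M' ≤ 0 := min_le_right _ _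
    set K := Nat.ceil (-M') with hK_def
    have hK : -M' ≤ c (K + 1) := by
      have h1 : -M' ≤ (K : ℝ) := Nat.le_ceil _
      have h2 : ((K + 1 : ℕ) : ℝ) ≤ c (K + 1) := hc_ge (K + 1)
      push_cast at h2
      linarith
    filter_upwards [eventually_le_atBot (min (-1) (M' / s K))] with t ht
    have ht1 : t ≤ -1 := ht.trans (min_le_left _ _)
    have ht2 : t ≤ M' / s K := ht.trans (min_le_right _ _)
    have hχM' : χ t ≤ M' := by
      apply hub
      intro n
      rcases le_or_gt n K with hn | hn
      · have hskt : s K * t ≤ M' := by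
          have h1 : t * s K ≤ (M' / s K) * s K :=
            mul_le_mul_of_nonneg_right ht2 (hs_pos K).le
          have h2 : (M' / s K) * s K = M' := div_mul_cancel₀ _ (hs_pos K).ne'
          linarith [mul_comm t (s K)]
        have hsn : s K ≤ s n := hs_anti n K hn
        have : s n * t ≤ s K * t := mul_le_mul_of_nonpos_right hsn (by linarith : t ≤ 0)
        linarith [hc_nonneg n]
      · have hcn : c (K + 1) ≤ c n := hc_mono hn
        have h1 : s n * t ≤ 0 := mul_nonpos_of_nonneg_of_nonpos (hs_pos n).le (by linarith)
        linarith
    linarith [min_le_left M 0]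
  · -- χ t / t → 0
    rw [Metric.tendsto_nhds]
    intro ε hε
    obtain ⟨n, hn⟩ : ∃ n, s n < ε / 2 := (hs0.eventually_lt_const (half_pos hε)).exists
    filter_upwards [eventually_le_atBot (min (-1) (-(c n) / (ε / 2)))] with t ht
    have ht1 : t ≤ -1 := ht.trans (min_le_left _ _)
    have ht2 : t ≤ -(c n) / (ε / 2) := ht.trans (min_le_right _ _)
    have htneg : t < 0 := lt_of_le_of_lt ht1 (by norm_num)
    have h0 : 0 ≤ χ t / t := div_nonneg_of_nonpos (hnonpos t ht1) htneg.le
    have hup : χ t / t ≤ s n - c n / t := by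
      have h1 : χ t / t ≤ (s n * t - c n) / t :=
        div_le_div_of_nonpos_of_le htneg.le (hle n t)
      have h2 : (s n * t - c n) / t = s n - c n / t := by
        field_simp [htneg.ne]
      linarith
    have hcnt : -(c n / t) ≤ ε / 2 := by
      have h1 : t * (ε / 2) ≤ (-(c n) / (ε / 2)) * (ε / 2) :=
        mul_le_mul_of_nonneg_right ht2 (half_pos hε).le
      have h2 : (-(c n) / (ε / 2)) * (ε / 2) = -(c n) := div_mul_cancel₀ _ (half_pos hε).ne'
      -- so t * (ε/2) ≤ -(c n), i.e. c n ≤ -(ε/2) * t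
      have h3 : c n ≤ (ε / 2) * (-t) := by nlinarith
      have h4 : c n / (-t) ≤ ε / 2 := by
        rw [div_le_iff₀ (by linarith : (0:ℝ) < -t)]
        linarith [h3]
      have h5 : -(c n / t) = c n / (-t) := by rw [div_neg]
      linarith [h5 ▸ h4]
    rw [Real.dist_eq, sub_zero, abs_of_nonneg h0]
    have : χ t / t ≤ s n + -(c n / t) := by linarith
    linarith
  · -- the integral is finite
    set g : ℕ → X → ℝ≥0∞ := fun n x =>
      ENNReal.ofReal (Real.exp (s n * φ x - c n - α * φ x)) with hg_def
    have hgm : ∀ n, Measurable (g n) := by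
      intro n
      apply ENNReal.measurable_ofReal.comp
      apply Real.measurable_exp.comp
      exact ((hφm.const_mul (s n)).sub_const (c n)).sub (hφm.const_mul α)
    have step1 : ∀ x, ENNReal.ofReal (Real.exp (χ (φ x) - α * φ x)) ≤ ∑' n, g n x := by
      intro x
      set t := φ x with ht_def
      have hf_mono : Monotone (fun y : ℝ => ENNReal.ofReal (Real.exp (y - α * t))) := by
        intro a b hab
        exact ENNReal.ofReal_le_ofReal (Real.exp_le_exp.2 (by linarith))
      have hf_cont : ContinuousAt (fun y : ℝ => ENNReal.ofReal (Real.exp (y - α * t)))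
          (⨆ n, (s n * t - c n)) :=
        (ENNReal.continuous_ofReal.comp
          (Real.continuous_exp.comp (continuous_id.sub continuous_const))).continuousAt
      have key : ENNReal.ofReal (Real.exp (χ t - α * t))
          = ⨆ n, ENNReal.ofReal (Real.exp ((s n * t - c n) - α * t)) :=
        Monotone.map_ciSup_of_continuousAt hf_cont hf_mono (hbdd t)
      rw [key]
      exact iSup_le fun n => le_trans (le_of_eq rfl) (ENNReal.le_tsum n)
    have step2 : ∀ n, (∫⁻ x, g n x ∂μ) ≤ ENNReal.ofReal (Real.exp (-(n : ℝ))) := by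
      intro n
      have hsplit : ∀ x, g n x = ENNReal.ofReal (Real.exp (-(c n)))
          * ENNReal.ofReal (Real.exp (-(α - s n) * φ x)) := by
        intro x
        rw [hg_def]
        simp only []
        rw [← ENNReal.ofReal_mul (Real.exp_nonneg _), ← Real.exp_add]
        congr 1
        ring
      have hεs : (2 : ℝ) ^ (-((n : ℝ) + 1) - 1) ≤ s n := by
        apply Real.rpow_le_rpow_of_exponent_le one_le_two
        linarith
      have hpt : ∀ x, ENNReal.ofReal (Real.exp (-(α - s n) * φ x))
          ≤ ENNReal.ofReal (Real.exp (-(α - 2 ^ (-((n : ℝ) + 1) - 1)) * φ x)) := by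
        intro x
        apply ENNReal.ofReal_le_ofReal
        apply Real.exp_le_exp.2
        have h1 : φ x ≤ -1 := hφ x
        nlinarith [hεs]
      calc (∫⁻ x, g n x ∂μ)
          = ENNReal.ofReal (Real.exp (-(c n)))
              * ∫⁻ x, ENNReal.ofReal (Real.exp (-(α - s n) * φ x)) ∂μ := by
            simp_rw [hsplit]
            rw [lintegral_const_mul]
            exact ENNReal.measurable_ofReal.comp
              (Real.measurable_exp.comp (hφm.const_mul _))
        _ ≤ ENNReal.ofReal (Real.exp (-(c n))) * I n := by
            apply mul_le_mul_right
            exact lintegral_mono fun x => hpt x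
        _ ≤ ENNReal.ofReal (Real.exp (-(c n))) * ENNReal.ofReal (B n) := by
            apply mul_le_mul_right
            rw [← ENNReal.ofReal_toReal (hI n).ne]
            exact ENNReal.ofReal_le_ofReal (le_max_right _ _)
        _ = ENNReal.ofReal (Real.exp (-(c n)) * B n) :=
            (ENNReal.ofReal_mul (Real.exp_nonneg _)).symm
        _ ≤ ENNReal.ofReal (Real.exp (-(n : ℝ))) := by
            apply ENNReal.ofReal_le_ofReal
            have h1 : Real.exp (-(c n)) ≤ Real.exp (-(n : ℝ) - Real.log (B n)) :=
              Real.exp_le_exp.2 (by linarith [hc_single n])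
            have h2 : Real.exp (-(n : ℝ) - Real.log (B n))
                = Real.exp (-(n : ℝ)) / B n := by
              rw [Real.exp_sub, Real.exp_log (hBpos n)]
            have h3 : Real.exp (-(c n)) * B n
                ≤ (Real.exp (-(n : ℝ)) / B n) * B n := by
              apply mul_le_mul_of_nonneg_right _ (hBpos n).le
              rw [← h2]; exact h1
            have h4 : (Real.exp (-(n : ℝ)) / B n) * B n = Real.exp (-(n : ℝ)) :=
              div_mul_cancel₀ _ (hBpos n).ne'
            linarith
    calc (∫⁻ x, ENNReal.ofReal (Real.exp (χ (φ x) - α * φ x)) ∂μ)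
        ≤ ∫⁻ x, ∑' n, g n x ∂μ := lintegral_mono step1
      _ = ∑' n, ∫⁻ x, g n x ∂μ := lintegral_tsum fun n => (hgm n).aemeasurable
      _ ≤ ∑' n : ℕ, ENNReal.ofReal (Real.exp (-(n : ℝ))) := ENNReal.tsum_le_tsum step2
      _ < ⊤ := by
          have hgeom : ∀ n : ℕ, ENNReal.ofReal (Real.exp (-(n : ℝ)))
              = (ENNReal.ofReal (Real.exp (-1))) ^ n := by
            intro n
            rw [← ENNReal.ofReal_pow (Real.exp_nonneg _), ← Real.exp_nat_mul]
            norm_num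
          rw [tsum_congr hgeom, ENNReal.tsum_geometric]
          rw [ENNReal.inv_lt_top]
          rw [tsub_pos_iff_lt]
          rw [ENNReal.ofReal_lt_one]
          exact Real.exp_lt_one_iff.2 (by norm_num)
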